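/- Let ξ be a nonnegative random variable with mean μ = E[ξ] and finite variance σ² = E[(ξ−μ)²], and let c > 0. Define the Jensen gap J = μ/(μ+c) − E[ξ/(ξ+c)]. Then 0 ≤ J ≤ σ²/(μ+c)². -/

import Mathlib

open MeasureTheory

lemma jensen_aux_upper (c μ x : ℝ) (hc : 0 < c) (hμ : 0 ≤ μ) (hx : 0 ≤ x) :
    x / (x + c) ≤ μ / (μ + c) + c / (μ + c) ^ 2 * (x - μ) := by
  have h1 : 0 < x + c := by linarith
  have h2 : 0 < μ + c := by linarith
  have key : μ / (μ + c) + c / (μ + c) ^ 2 * (x - μ) - x / (x + c)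
      = c * (x - μ) ^ 2 / ((x + c) * (μ + c) ^ 2) := by
    field_simp
    ring
  nlinarith [div_nonneg (by positivity : (0:ℝ) ≤ c * (x - μ) ^ 2)
    (by positivity : (0:ℝ) ≤ (x + c) * (μ + c) ^ 2)]

lemma jensen_aux_lower (c μ x : ℝ) (hc : 0 < c) (hμ : 0 ≤ μ) (hx : 0 ≤ x) :
    μ / (μ + c) + c / (μ + c) ^ 2 * (x - μ) - (x - μ) ^ 2 / (μ + c) ^ 2
      ≤ x / (x + c) := by
  have h1 : 0 < x + c := by linarith
  have h2 : 0 < μ + c := by linarith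
  have key : x / (x + c) -
      (μ / (μ + c) + c / (μ + c) ^ 2 * (x - μ) - (x - μ) ^ 2 / (μ + c) ^ 2)
      = x * (x - μ) ^ 2 / ((x + c) * (μ + c) ^ 2) := by
    field_simp
    ring
  nlinarith [div_nonneg (by positivity : (0:ℝ) ≤ x * (x - μ) ^ 2)
    (by positivity : (0:ℝ) ≤ (x + c) * (μ + c) ^ 2)]

/-- Two-sided bound on the Jensen gap `J = μ/(μ+c) − E[ξ/(ξ+c)]`:
for a nonnegative random variable `ξ` with mean `μ` and finite variance `σ²`,
and `c > 0`, one has `0 ≤ J ≤ σ²/(μ+c)²`. -/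
theorem jensen_gap_bounds
    {Ω : Type*} [MeasurableSpace Ω] (P : Measure Ω) [IsProbabilityMeasure P]
    (ξ : Ω → ℝ) (hξ : Integrable ξ P) (hpos : ∀ᵐ ω ∂P, 0 ≤ ξ ω)
    (μ σ2 : ℝ) (hμ : μ = ∫ ω, ξ ω ∂P)
    (hvar_int : Integrable (fun ω => (ξ ω - μ) ^ 2) P)
    (hσ2 : σ2 = ∫ ω, (ξ ω - μ) ^ 2 ∂P)
    (c : ℝ) (hc : 0 < c)
    (J : ℝ) (hJ : J = μ / (μ + c) - ∫ ω, ξ ω / (ξ ω + c) ∂P) :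
    0 ≤ J ∧ J ≤ σ2 / (μ + c) ^ 2 := by
  have hμ0 : 0 ≤ μ := by
    rw [hμ]; exact integral_nonneg_of_ae hpos
  have hD : 0 < μ + c := by linarith
  -- integrability of g = ξ/(ξ+c)
  have hgm : AEStronglyMeasurable (fun ω => ξ ω / (ξ ω + c)) P :=
    (hξ.aemeasurable.div (hξ.aemeasurable.add aemeasurable_const)).aestronglyMeasurable
  have hg_int : Integrable (fun ω => ξ ω / (ξ ω + c)) P := by
    refine Integrable.mono' (integrable_const (1:ℝ)) hgm ?_
    filter_upwards [hpos] with ω hω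
    have h1 : 0 < ξ ω + c := by linarith
    rw [Real.norm_eq_abs, abs_of_nonneg (div_nonneg hω h1.le)]
    rw [div_le_one h1]; linarith
  -- integrability of the tangent line
  have hdiff_int : Integrable (fun ω => ξ ω - μ) P := hξ.sub (integrable_const μ)
  have hmul_int : Integrable (fun ω => c / (μ + c) ^ 2 * (ξ ω - μ)) P :=
    hdiff_int.const_mul _
  have hL_int : Integrable (fun ω => μ / (μ + c) + c / (μ + c) ^ 2 * (ξ ω - μ)) P :=
    (integrable_const _).add hmul_int
  have hL2_int : Integrable (fun ω =>
      μ / (μ + c) + c / (μ + c) ^ 2 * (ξ ω - μ) - (ξ ω - μ) ^ 2 / (μ + c) ^ 2) P :=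
    hL_int.sub (hvar_int.div_const _)
  -- integral of the tangent line equals μ/(μ+c)
  have hsub : ∫ ω, (ξ ω - μ) ∂P = 0 := by
    rw [integral_sub hξ (integrable_const μ), integral_const, probReal_univ,
      one_smul, ← hμ, sub_self]
  have hL_val : ∫ ω, (μ / (μ + c) + c / (μ + c) ^ 2 * (ξ ω - μ)) ∂P = μ / (μ + c) := by
    rw [integral_add (integrable_const _) hmul_int,
      integral_const, probReal_univ, one_smul,
      integral_const_mul, hsub, mul_zero, add_zero]
  constructor
  · -- J ≥ 0 : ∫ g ≤ μ/(μ+c)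
    have h1 : ∫ ω, ξ ω / (ξ ω + c) ∂P
        ≤ ∫ ω, (μ / (μ + c) + c / (μ + c) ^ 2 * (ξ ω - μ)) ∂P := by
      refine integral_mono_ae hg_int hL_int ?_
      filter_upwards [hpos] with ω hω
      exact jensen_aux_upper c μ (ξ ω) hc hμ0 hω
    rw [hJ]; rw [hL_val] at h1; linarith
  · -- J ≤ σ²/(μ+c)²
    have h2 : ∫ ω, (μ / (μ + c) + c / (μ + c) ^ 2 * (ξ ω - μ) - (ξ ω - μ) ^ 2 / (μ + c) ^ 2) ∂P
        ≤ ∫ ω, ξ ω / (ξ ω + c) ∂P := by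
      refine integral_mono_ae hL2_int hg_int ?_
      filter_upwards [hpos] with ω hω
      exact jensen_aux_lower c μ (ξ ω) hc hμ0 hω
    have hval : ∫ ω, (μ / (μ + c) + c / (μ + c) ^ 2 * (ξ ω - μ) - (ξ ω - μ) ^ 2 / (μ + c) ^ 2) ∂P
        = μ / (μ + c) - σ2 / (μ + c) ^ 2 := by
      rw [integral_sub hL_int (hvar_int.div_const _), hL_val, integral_div, ← hσ2]
    rw [hval] at h2
    rw [hJ]; linarith
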